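/- Let Ψ ∈ L^∞(M_n) and W an n×n matrix-valued weight with W(ζ) ≥ a²I a.e., where a > ||H_Ψ||_e. Let K be a closed subspace of H²(ℂ^n) on which ||H_Ψ f||_2 ≤ ||f||_W for all f ∈ K. If sup{ ||H_Ψ f||_2 : f ∈ K, ||f||_W = 1 } = 1, then there exists a nonzero f₀ ∈ K with ||H_Ψ f₀||_2 = ||f₀||_W. -/

import Mathlib

open MeasureTheory ComplexConjugate

noncomputable section

namespace MeroIdx

/-! Singular values and essential norm of operators between Hilbert spaces -/

variable {H K : Type*} [NormedAddCommGroup H] [InnerProductSpace ℂ H]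
  [NormedAddCommGroup K] [InnerProductSpace ℂ K]

/-- `sValue m T` is the `m`-th singular value of `T`, defined as the distance from `T`
to the operators of rank at most `m`. -/
def sValue (m : ℕ) (T : H →L[ℂ] K) : ℝ :=
  sInf { c : ℝ | ∃ R : H →L[ℂ] K, Module.rank ℂ ↥(LinearMap.range (R : H →ₗ[ℂ] K)) ≤ m ∧ c = ‖T - R‖ }

/-- The essential norm of `T` : the distance from `T` to the compact operators. -/
def essNorm (T : H →L[ℂ] K) : ℝ :=
  sInf { c : ℝ | ∃ S : H →L[ℂ] K, IsCompactOperator S ∧ c = ‖T - S‖ }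

/-! The circle, L², Hardy space -/

instance : Fact (0 < 2 * Real.pi) := ⟨by positivity⟩

abbrev circ : Type := AddCircle (2 * Real.pi)

/-- Normalized Lebesgue (Haar) measure on the circle. -/
def mu : Measure circ := @AddCircle.haarAddCircle (2 * Real.pi) _

instance : IsProbabilityMeasure mu := by unfold mu; infer_instance

abbrev L2 (m : ℕ) := Lp (EuclideanSpace ℂ (Fin m)) 2 mu

/-- The function `ζ ↦ ζ` on the circle (i.e. `t ↦ exp (i t)`). -/
def expmap : circ → ℂ := fun t => fourier 1 t

/-- The element `z^k ⬝ e_i` of `L²(ℂ^m)`. -/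
def fvec (m : ℕ) (k : ℤ) (i : Fin m) : L2 m :=
  ContinuousMap.toLp 2 mu ℂ
    ⟨fun t => (fourier k t : ℂ) • (EuclideanSpace.single i (1 : ℂ)),
      ((fourier k).continuous).smul continuous_const⟩

/-- The span of the negative-frequency basis vectors. -/
def negSpan (m : ℕ) : Submodule ℂ (L2 m) :=
  Submodule.span ℂ { f | ∃ k : ℤ, k < 0 ∧ ∃ i : Fin m, f = fvec m k i }

/-- The Hardy space `H²(ℂ^m)`: the orthogonal complement of the negative frequencies,
i.e. the functions in `L²` whose negative Fourier coefficients vanish. -/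
def Hardy (m : ℕ) : Submodule ℂ (L2 m) := (negSpan m)ᗮ

instance (m : ℕ) : CompleteSpace ↥(Hardy m) :=
  (Submodule.isClosed_orthogonal _).completeSpace_coe

/-- Orthogonal projection onto the Hardy space. -/
def Pplus (m : ℕ) : L2 m →L[ℂ] ↥(Hardy m) := (Hardy m).orthogonalProjection

/-- `P₊` as an endomorphism of `L²`. -/
def PplusL (m : ℕ) : L2 m →L[ℂ] L2 m := (Hardy m).subtypeL.comp (Pplus m)

/-- `P₋ = I - P₊`, the orthogonal projection onto `H²₋(ℂ^m) = L² ⊖ H²`. -/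
def PminusL (m : ℕ) : L2 m →L[ℂ] L2 m := ContinuousLinearMap.id ℂ (L2 m) - PplusL m

/-! Matrix symbols, multiplication operators, Hankel and Toeplitz operators -/

/-- The continuous linear map `ℂ^n → ℂ^m` given by a matrix. -/
def matCLM {m n : ℕ} (A : Matrix (Fin m) (Fin n) ℂ) :
    EuclideanSpace ℂ (Fin n) →L[ℂ] EuclideanSpace ℂ (Fin m) :=
  LinearMap.toContinuousLinearMap (Matrix.toEuclideanLin A)

/-- The operator norm of a matrix (as an operator `ℓ²(n) → ℓ²(m)`). -/
def matOpNorm {m n : ℕ} (A : Matrix (Fin m) (Fin n) ℂ) : ℝ := ‖matCLM A‖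

/-- The `j`-th singular value of a matrix. -/
def matSV {m n : ℕ} (j : ℕ) (A : Matrix (Fin m) (Fin n) ℂ) : ℝ := sValue j (matCLM A)

/-- Essential supremum of a (nonnegative) real function on the circle. -/
def essSupR (g : circ → ℝ) : ℝ := (essSup (fun t => ENNReal.ofReal (g t)) mu).toReal

/-- The `L^∞(M_{m,n})`-norm: essential supremum of the pointwise operator norm. -/
def linfNorm {m n : ℕ} (Φ : circ → Matrix (Fin m) (Fin n) ℂ) : ℝ :=
  essSupR fun t => matOpNorm (Φ t)

/-- `M` is the operator of multiplication by the matrix function `Φ` on `L²`. -/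
def IsMulOp {m n : ℕ} (Φ : circ → Matrix (Fin m) (Fin n) ℂ) (M : L2 n →L[ℂ] L2 m) : Prop :=
  ∀ f : L2 n, (M f : circ → EuclideanSpace ℂ (Fin m))
      =ᵐ[mu] fun t => Matrix.toEuclideanLin (Φ t) (f t)

/-- The Hankel operator `H_Φ = P₋ M_Φ : H²(ℂ^n) → H²₋(ℂ^m) ⊆ L²(ℂ^m)`,
presented in terms of the multiplication operator `M = M_Φ`. -/
def Hankel {m n : ℕ} (M : L2 n →L[ℂ] L2 m) : ↥(Hardy n) →L[ℂ] L2 m :=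
  (PminusL m).comp (M.comp (Hardy n).subtypeL)

/-- The Toeplitz operator `T_Φ = P₊ M_Φ : H²(ℂ^n) → H²(ℂ^m)`. -/
def Toeplitz {m n : ℕ} (M : L2 n →L[ℂ] L2 m) : ↥(Hardy n) →L[ℂ] ↥(Hardy m) :=
  (Pplus m).comp (M.comp (Hardy n).subtypeL)

/-! Blaschke–Potapov products and the class `H^∞_{(k)}` -/

/-- An elementary Blaschke–Potapov factor. -/
def bpFactor {n : ℕ} (l : ℂ) (P : Matrix (Fin n) (Fin n) ℂ) (z : ℂ) :
    Matrix (Fin n) (Fin n) ℂ :=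
  ((z - l) / (1 - (starRingEnd ℂ) l * z)) • P + (1 - P)

/-- `B` (as a function on the circle) is the boundary-value function of a finite
Blaschke–Potapov product of degree `k`. -/
def IsBPProd (n k : ℕ) (B : circ → Matrix (Fin n) (Fin n) ℂ) : Prop :=
  ∃ (r : ℕ) (U : Matrix (Fin n) (Fin n) ℂ) (l : Fin r → ℂ)
    (P : Fin r → Matrix (Fin n) (Fin n) ℂ),
    U ∈ Matrix.unitaryGroup (Fin n) ℂ ∧ (∀ j, ‖l j‖ < 1) ∧
    (∀ j, IsSelfAdjoint (P j) ∧ P j * P j = P j) ∧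
    (∑ j, (P j).rank) = k ∧
    ∀ t, B t = U * (List.ofFn fun j => bpFactor (l j) (P j) (expmap t)).prod

/-- `Q ∈ H^∞_{(k)}(M_{m,n})`: there is a Blaschke–Potapov product `B` of degree `k`
such that `QB ∈ H^∞`, i.e. multiplication by `QB` maps `H²(ℂ^n)` into `H²(ℂ^m)`. -/
def HkClass {m n : ℕ} (k : ℕ) (Q : circ → Matrix (Fin m) (Fin n) ℂ) : Prop :=
  ∃ (B : circ → Matrix (Fin n) (Fin n) ℂ) (M : L2 n →L[ℂ] L2 m),
    IsBPProd n k B ∧ IsMulOp (fun t => Q t * B t) M ∧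
    ∀ f : L2 n, f ∈ Hardy n → M f ∈ Hardy m

/-- The nested sets `Ω_j^{(k)}(Φ)` from superoptimal approximation:
`Ω_0` consists of the best approximants from `H^∞_{(k)}` in the `L^∞` norm and
`Ω_{j+1}` consists of those elements of `Ω_j` minimizing `ess sup s_{j+1}(Φ - Q)`. -/
def Omega {m n : ℕ} (k : ℕ) (Φ : circ → Matrix (Fin m) (Fin n) ℂ) :
    ℕ → Set (circ → Matrix (Fin m) (Fin n) ℂ)
  | 0 => { Q | HkClass k Q ∧ ∀ Q', HkClass k Q' →
      linfNorm (fun t => Φ t - Q t) ≤ linfNorm (fun t => Φ t - Q' t) }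
  | (j+1) => { Q | Q ∈ Omega k Φ j ∧ ∀ Q' ∈ Omega k Φ j,
      essSupR (fun t => matSV (j+1) (Φ t - Q t)) ≤ essSupR (fun t => matSV (j+1) (Φ t - Q' t)) }

/-- The superoptimal singular values `t_j^{(k)}(Φ)` of degree `k`. -/
def tSV {m n : ℕ} (k : ℕ) (Φ : circ → Matrix (Fin m) (Fin n) ℂ) (j : ℕ) : ℝ :=
  sInf { v : ℝ | ∃ Q ∈ Omega k Φ j, v = essSupR fun t => matSV j (Φ t - Q t) }

/-- `Φ` is `k`-admissible: `s_k(H_Φ) < s_{k-1}(H_Φ)` and the essential norm of `H_Φ`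
is less than every nonzero superoptimal singular value of degree `k` of `Φ`. -/
def kAdmissible {n : ℕ} (k : ℕ) (Φ : circ → Matrix (Fin n) (Fin n) ℂ)
    (MΦ : L2 n →L[ℂ] L2 n) : Prop :=
  IsMulOp Φ MΦ ∧ sValue k (Hankel MΦ) < sValue (k-1) (Hankel MΦ) ∧
  ∀ j : ℕ, tSV k Φ j ≠ 0 → essNorm (Hankel MΦ) < tSV k Φ j

/-- The squared weighted norm `‖f‖²_W = ∫ (W(ζ) f(ζ), f(ζ)) dm(ζ)` for a matrix weight. -/
def wNormSq {n : ℕ} (W : circ → Matrix (Fin n) (Fin n) ℂ) (f : L2 n) : ℝ :=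
  ∫ t, (inner ℂ (Matrix.toEuclideanLin (W t) (f t)) (f t) : ℂ).re ∂mu

/-- `J` is the flip operator `(Jf)(ζ) = conj ζ • conj (f ζ)` on `L²(ℂ^m)`. -/
def IsFlip (m : ℕ) (J : L2 m → L2 m) : Prop :=
  ∀ f : L2 m, (J f : circ → EuclideanSpace ℂ (Fin m)) =ᵐ[mu]
    fun t => (starRingEnd ℂ) (expmap t) •
      (WithLp.toLp 2 (fun i => (starRingEnd ℂ) (f t i)) : EuclideanSpace ℂ (Fin m))

/-- `Φ ∈ L^∞(M_{m,n})`: measurable and essentially bounded. -/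
def MemLinf {m n : ℕ} (Φ : circ → Matrix (Fin m) (Fin n) ℂ) : Prop :=
  AEStronglyMeasurable Φ mu ∧
    essSup (fun t => ENNReal.ofReal (matOpNorm (Φ t))) mu < ⊤

/-!
Since `a > ‖H_Ψ‖_e`, write `H_Ψ = S + (H_Ψ - S)` with `S` compact and `‖H_Ψ - S‖ = r a`, `r < 1`;
as `a ‖f‖₂ ≤ ‖f‖_W`, we get `‖(H_Ψ - S) f‖₂ ≤ r ‖f‖_W`. Take `f_k ∈ K` with `‖f_k‖_W = 1` and
`‖H_Ψ f_k‖₂ → 1`, and pass to a subsequence along which `S f_k` converges. The parallelogram laws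
for `‖·‖_W` and `‖·‖₂`, applied to `‖H_Ψ (f_j + f_k)‖₂ ≤ ‖f_j + f_k‖_W`, give
`(1 - r) ‖f_j - f_k‖_W ≤ (4 - 2 ‖H_Ψ f_j‖₂² - 2 ‖H_Ψ f_k‖₂²)^{1/2} + ‖S f_j - S f_k‖₂`,
so `(f_k)` is Cauchy, and its limit attains the supremum. Writing `‖f‖²_W = Re ⟪M_W f, f⟫` with
`M_W` the multiplication operator makes `‖·‖_W` continuous on `H²(ℂ^n)`.
-/

open Filter Topology

theorem essNorm_nonneg (T : H →L[ℂ] K) : 0 ≤ essNorm T :=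
  Real.sInf_nonneg fun _ ⟨_, _, hc⟩ => hc ▸ norm_nonneg _

theorem exists_isCompactOperator_norm_sub_lt {T : H →L[ℂ] K} {a : ℝ} (h : essNorm T < a) :
    ∃ S : H →L[ℂ] K, IsCompactOperator S ∧ ‖T - S‖ < a := by
  have hne : {c : ℝ | ∃ S : H →L[ℂ] K, IsCompactOperator S ∧ c = ‖T - S‖}.Nonempty :=
    ⟨_, 0, isCompactOperator_zero, rfl⟩
  obtain ⟨_, ⟨S, hS, rfl⟩, hlt⟩ := exists_lt_of_csInf_lt hne h
  exact ⟨S, hS, hlt⟩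

section NormAttainment

variable {𝕜 E F : Type*} [RCLike 𝕜] [NormedAddCommGroup E] [NormedSpace 𝕜 E]
  [NormedAddCommGroup F] [InnerProductSpace 𝕜 F]

theorem sqrt_sub_le_of_parallelogram {T S : E →L[𝕜] F} {q : E → ℝ} {a : ℝ} (ha : 0 < a)
    (hpar : ∀ f g, q (f + g) + q (f - g) = 2 * q f + 2 * q g)
    (hlow : ∀ f, a ^ 2 * ‖f‖ ^ 2 ≤ q f) {f g : E} (hf : q f = 1) (hg : q g = 1)
    (hfg : ‖T (f + g)‖ ≤ √(q (f + g))) :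
    (1 - ‖T - S‖ / a) * √(q (f - g)) ≤
      √(4 - 2 * ‖T f‖ ^ 2 - 2 * ‖T g‖ ^ 2) + ‖S f - S g‖ := by
  have hq : ∀ u, 0 ≤ q u := fun u => le_trans (by positivity) (hlow u)
  have hnorm : ‖f - g‖ ≤ √(q (f - g)) / a := by
    rw [le_div_iff₀ ha, mul_comm]
    exact Real.le_sqrt_of_sq_le (by rw [mul_pow]; exact hlow _)
  set x := √(q (f - g))
  set ε := 4 - 2 * ‖T f‖ ^ 2 - 2 * ‖T g‖ ^ 2
  have hx : x ^ 2 ≤ ε + ‖T (f - g)‖ ^ 2 := by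
    have hF := parallelogram_law_with_norm 𝕜 (T f) (T g)
    rw [← map_add, ← map_sub] at hF
    have hsq := pow_le_pow_left₀ (norm_nonneg _) hfg 2
    rw [Real.sq_sqrt (hq _)] at hsq
    rw [Real.sq_sqrt (hq _)]
    linarith [hpar f g]
  have hxε : x ≤ √ε + ‖T (f - g)‖ := by
    have hε : ε ≤ √ε ^ 2 := Real.sq_sqrt' ▸ le_max_left _ _
    nlinarith [Real.sqrt_nonneg ε, Real.sqrt_nonneg (q (f - g)), norm_nonneg (T (f - g))]
  have hTu : ‖T (f - g)‖ ≤ ‖S f - S g‖ + ‖T - S‖ / a * x := by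
    calc ‖T (f - g)‖ = ‖S (f - g) + (T - S) (f - g)‖ := by simp
      _ ≤ ‖S (f - g)‖ + ‖T - S‖ * ‖f - g‖ := norm_add_le_of_le le_rfl ((T - S).le_opNorm _)
      _ ≤ ‖S f - S g‖ + ‖T - S‖ * (x / a) := by
        rw [map_sub]; gcongr
      _ = ‖S f - S g‖ + ‖T - S‖ / a * x := by ring
  linarith

theorem cauchySeq_of_tendsto_norm_apply {T S : E →L[𝕜] F} {q : E → ℝ} {a : ℝ} (ha : 0 < a)
    (hTS : ‖T - S‖ < a) (hpar : ∀ f g, q (f + g) + q (f - g) = 2 * q f + 2 * q g)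
    (hlow : ∀ f, a ^ 2 * ‖f‖ ^ 2 ≤ q f) {G : ℕ → E} (hq : ∀ k, q (G k) = 1)
    (hbound : ∀ j k, ‖T (G j + G k)‖ ≤ √(q (G j + G k)))
    (hT : Tendsto (fun k => ‖T (G k)‖) atTop (𝓝 1)) (hS : CauchySeq (S ∘ G)) :
    CauchySeq G := by
  rw [cauchySeq_iff_tendsto_dist_atTop_0] at hS ⊢
  have hr : 0 < (1 - ‖T - S‖ / a) * a := by
    have : ‖T - S‖ / a < 1 := (div_lt_one ha).2 hTS
    nlinarith
  have hT₁ : Tendsto (fun p : ℕ × ℕ => ‖T (G p.1)‖) atTop (𝓝 1) :=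
    hT.comp (tendsto_fst.mono_left prod_atTop_atTop_eq.ge)
  have hT₂ : Tendsto (fun p : ℕ × ℕ => ‖T (G p.2)‖) atTop (𝓝 1) :=
    hT.comp (tendsto_snd.mono_left prod_atTop_atTop_eq.ge)
  have hbound_lim : Tendsto (fun p : ℕ × ℕ =>
      (√(4 - 2 * ‖T (G p.1)‖ ^ 2 - 2 * ‖T (G p.2)‖ ^ 2) + dist (S (G p.1)) (S (G p.2))) /
        ((1 - ‖T - S‖ / a) * a)) atTop (𝓝 0) := by
    have := (((((tendsto_const_nhds (x := (4 : ℝ))).sub ((hT₁.pow 2).const_mul 2)).sub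
      ((hT₂.pow 2).const_mul 2)).sqrt).add hS).div_const ((1 - ‖T - S‖ / a) * a)
    norm_num at this
    exact this
  refine squeeze_zero (fun _ => dist_nonneg) (fun p => ?_) hbound_lim
  have hkey := sqrt_sub_le_of_parallelogram (S := S) ha hpar hlow (hq p.1) (hq p.2) (hbound _ _)
  have hnorm : a * ‖G p.1 - G p.2‖ ≤ √(q (G p.1 - G p.2)) :=
    Real.le_sqrt_of_sq_le (by rw [mul_pow]; exact hlow _)
  rw [le_div_iff₀ hr, dist_eq_norm, dist_eq_norm]
  nlinarith

theorem exists_ne_zero_norm_apply_eq_sqrt [CompleteSpace E] {T S : E →L[𝕜] F}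
    (hS : IsCompactOperator S) {q : E → ℝ} {a : ℝ} (ha : 0 < a) (hTS : ‖T - S‖ < a)
    (hq : Continuous q) (hpar : ∀ f g, q (f + g) + q (f - g) = 2 * q f + 2 * q g)
    (hlow : ∀ f, a ^ 2 * ‖f‖ ^ 2 ≤ q f) {K : Submodule 𝕜 E} (hK : IsClosed (K : Set E))
    (hbound : ∀ f ∈ K, ‖T f‖ ≤ √(q f))
    (hsup : sSup { v : ℝ | ∃ f ∈ K, √(q f) = 1 ∧ v = ‖T f‖ } = 1) :
    ∃ f₀ ∈ K, f₀ ≠ 0 ∧ ‖T f₀‖ = √(q f₀) := by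
  have hne : { v : ℝ | ∃ f ∈ K, √(q f) = 1 ∧ v = ‖T f‖ }.Nonempty :=
    Set.nonempty_iff_ne_empty.2 fun h => by
      rw [h, Real.sSup_empty] at hsup
      exact zero_ne_one hsup
  have hbdd : BddAbove { v : ℝ | ∃ f ∈ K, √(q f) = 1 ∧ v = ‖T f‖ } :=
    ⟨1, by rintro _ ⟨f, hf, hf1, rfl⟩; exact hf1 ▸ hbound f hf⟩
  obtain ⟨v, -, hv, hvK⟩ := exists_seq_tendsto_sSup hne hbdd
  choose F hFK hFq hFv using hvK
  rw [hsup] at hv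
  simp_rw [Real.sqrt_eq_one] at hFq
  have hFball : ∀ k, F k ∈ Metric.closedBall (0 : E) (1 / a) := fun k => by
    rw [mem_closedBall_zero_iff, le_div_iff₀ ha, mul_comm]
    simpa [hFq] using Real.le_sqrt_of_sq_le (y := q (F k)) (by rw [mul_pow]; exact hlow _)
  obtain ⟨C, hC, hSC⟩ := hS.image_closedBall_subset_compact (1 / a)
  obtain ⟨_, -, φ, hφ, hSφ⟩ := hC.tendsto_subseq fun k => hSC ⟨F k, hFball k, rfl⟩
  have hTφ : Tendsto (fun k => ‖T (F (φ k))‖) atTop (𝓝 1) := by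
    simpa only [Function.comp_def, hFv] using hv.comp hφ.tendsto_atTop
  obtain ⟨f₀, hf₀⟩ := cauchySeq_tendsto_of_complete <|
    cauchySeq_of_tendsto_norm_apply ha hTS hpar hlow (fun k => hFq (φ k))
      (fun j k => hbound _ (K.add_mem (hFK _) (hFK _))) hTφ hSφ.cauchySeq
  have hTf₀ : ‖T f₀‖ = 1 := tendsto_nhds_unique ((T.continuous.tendsto f₀).comp hf₀).norm hTφ
  have hqf₀ : q f₀ = 1 := tendsto_nhds_unique ((hq.tendsto f₀).comp hf₀) <| by
    simp only [Function.comp_def, hFq, tendsto_const_nhds]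
  refine ⟨f₀, hK.mem_of_tendsto hf₀ (.of_forall fun k => hFK _), ?_, ?_⟩
  · rintro rfl
    simp at hTf₀
  · rw [hTf₀, hqf₀, Real.sqrt_one]

end NormAttainment

theorem _root_.MeasureTheory.L2.integral_norm_sq {α 𝕜 E : Type*} [MeasurableSpace α]
    {μ : Measure α} [RCLike 𝕜] [NormedAddCommGroup E] [InnerProductSpace 𝕜 E] (f : α →₂[μ] E) :
    ∫ x, ‖f x‖ ^ 2 ∂μ = ‖f‖ ^ 2 := by
  rw [← inner_self_eq_norm_sq (𝕜 := 𝕜), L2.inner_def, ← integral_re (L2.integrable_inner f f)]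
  simp_rw [inner_self_eq_norm_sq]

theorem _root_.ContinuousLinearMap.reApplyInnerSelf_add_add_reApplyInnerSelf_sub {𝕜 E : Type*}
    [RCLike 𝕜] [NormedAddCommGroup E] [InnerProductSpace 𝕜 E] (A : E →L[𝕜] E) (f g : E) :
    A.reApplyInnerSelf (f + g) + A.reApplyInnerSelf (f - g) =
      2 * A.reApplyInnerSelf f + 2 * A.reApplyInnerSelf g := by
  simp only [ContinuousLinearMap.reApplyInnerSelf_apply, map_add, map_sub, inner_add_left,
    inner_add_right, inner_sub_left, inner_sub_right]
  ring

theorem continuous_matCLM {m n : ℕ} : Continuous (matCLM : Matrix (Fin m) (Fin n) ℂ → _) := by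
  refine continuous_clm_apply.2 fun ξ => ?_
  simp only [matCLM, LinearMap.coe_toContinuousLinearMap', Matrix.toLpLin_apply]
  exact (PiLp.continuous_toLp 2 _).comp (continuous_id.matrix_mulVec continuous_const)

theorem MemLinf.memLp_top_matCLM {m n : ℕ} {Φ : circ → Matrix (Fin m) (Fin n) ℂ}
    (hΦ : MemLinf Φ) : MemLp (fun t => matCLM (Φ t)) ⊤ mu := by
  refine ⟨continuous_matCLM.comp_aestronglyMeasurable hΦ.1, ?_⟩
  rw [eLpNorm_exponent_top]
  simpa [eLpNormEssSup, matOpNorm, ofReal_norm] using hΦ.2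

def MemLinf.mulOp {m n : ℕ} {Φ : circ → Matrix (Fin m) (Fin n) ℂ} (hΦ : MemLinf Φ) :
    L2 n →L[ℂ] L2 m :=
  (ContinuousLinearMap.id ℂ _).holderL mu ⊤ 2 2 hΦ.memLp_top_matCLM.toLp

theorem MemLinf.isMulOp_mulOp {m n : ℕ} {Φ : circ → Matrix (Fin m) (Fin n) ℂ}
    (hΦ : MemLinf Φ) : IsMulOp Φ hΦ.mulOp := by
  intro f
  filter_upwards [ContinuousLinearMap.coeFn_holder (r := 2) (ContinuousLinearMap.id ℂ _)
      hΦ.memLp_top_matCLM.toLp f, hΦ.memLp_top_matCLM.coeFn_toLp] with t h1 h2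
  simp only [MemLinf.mulOp, ContinuousLinearMap.holderL_apply_apply]
  rw [h1, h2]
  rfl

section Weighted

variable {n : ℕ} {W : circ → Matrix (Fin n) (Fin n) ℂ} {M : L2 n →L[ℂ] L2 n}

theorem IsMulOp.integrable_inner (hM : IsMulOp W M) (f : L2 n) :
    Integrable (fun t => inner ℂ (Matrix.toEuclideanLin (W t) (f t)) (f t)) mu :=
  (L2.integrable_inner (M f) f).congr <| by
    filter_upwards [hM f] with t ht
    rw [ht]

theorem IsMulOp.wNormSq_eq (hM : IsMulOp W M) (f : L2 n) :
    wNormSq W f = M.reApplyInnerSelf f := by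
  rw [ContinuousLinearMap.reApplyInnerSelf_apply, L2.inner_def,
    ← integral_re (L2.integrable_inner (M f) f)]
  refine integral_congr_ae ?_
  filter_upwards [hM f] with t ht
  rw [ht]
  rfl

theorem IsMulOp.sq_mul_norm_sq_le_wNormSq (hM : IsMulOp W M) {a : ℝ}
    (hW : ∀ᵐ ζ ∂mu, ∀ ξ : EuclideanSpace ℂ (Fin n),
      a ^ 2 * ‖ξ‖ ^ 2 ≤ (inner ℂ (matCLM (W ζ) ξ) ξ : ℂ).re) (f : L2 n) :
    a ^ 2 * ‖f‖ ^ 2 ≤ wNormSq W f := by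
  rw [← L2.integral_norm_sq (𝕜 := ℂ), ← integral_const_mul]
  refine integral_mono_ae (((memLp_two_iff_integrable_sq_norm (Lp.aestronglyMeasurable f)).1
    (Lp.memLp f)).const_mul _) (hM.integrable_inner f).re ?_
  filter_upwards [hW] with t ht
  exact ht (f t)

end Weighted

theorem exists_maximizer_weighted_hankel_general (n : ℕ)
    (M : L2 n →L[ℂ] L2 n)
    (W : circ → Matrix (Fin n) (Fin n) ℂ) (hWb : MemLinf W)
    (a : ℝ) (ha : essNorm (Hankel M) < a)
    (hW : ∀ᵐ ζ ∂mu, ∀ ξ : EuclideanSpace ℂ (Fin n),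
      a ^ 2 * ‖ξ‖ ^ 2 ≤ (inner ℂ (matCLM (W ζ) ξ) ξ : ℂ).re)
    (K : Submodule ℂ ↥(Hardy n)) (hK : IsClosed (K : Set ↥(Hardy n)))
    (hbound : ∀ f ∈ K, ‖Hankel M f‖ ≤ Real.sqrt (wNormSq W (↑f : L2 n)))
    (hsup : sSup { v : ℝ | ∃ f ∈ K, Real.sqrt (wNormSq W (↑f : L2 n)) = 1 ∧
        v = ‖Hankel M f‖ } = 1) :
    ∃ f₀ ∈ K, f₀ ≠ 0 ∧ ‖Hankel M f₀‖ = Real.sqrt (wNormSq W (↑f₀ : L2 n)) := by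
  obtain ⟨S, hS, hTS⟩ := exists_isCompactOperator_norm_sub_lt ha
  have hMW := hWb.isMulOp_mulOp
  refine exists_ne_zero_norm_apply_eq_sqrt hS ((essNorm_nonneg _).trans_lt ha) hTS ?_ ?_
    (fun f => hMW.sq_mul_norm_sq_le_wNormSq hW f) hK hbound hsup
  · simp_rw [hMW.wNormSq_eq]
    exact hWb.mulOp.reApplyInnerSelf_continuous.comp continuous_subtype_val
  · intro f g
    simp only [Submodule.coe_add, Submodule.coe_sub, hMW.wNormSq_eq]
    exact hWb.mulOp.reApplyInnerSelf_add_add_reApplyInnerSelf_sub f g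

/-- Let `W` be a matrix weight with `W(ζ) ≥ a² I` a.e. where
`a > ‖H_Ψ‖_e`, and let `K` be a closed subspace of `H²(ℂ^n)` on which `‖H_Ψ f‖₂ ≤ ‖f‖_W`.
If `sup { ‖H_Ψ f‖₂ : f ∈ K, ‖f‖_W = 1 } = 1`, then some nonzero `f₀ ∈ K` attains
`‖H_Ψ f₀‖₂ = ‖f₀‖_W`. -/
theorem exists_maximizer_weighted_hankel (n : ℕ)
    (Ψ : circ → Matrix (Fin n) (Fin n) ℂ) (hΨ : MemLinf Ψ)
    (M : L2 n →L[ℂ] L2 n) (hM : IsMulOp Ψ M)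
    (W : circ → Matrix (Fin n) (Fin n) ℂ) (hWb : MemLinf W)
    (a : ℝ) (ha : essNorm (Hankel M) < a)
    (hW : ∀ᵐ ζ ∂mu, ∀ ξ : EuclideanSpace ℂ (Fin n),
      a ^ 2 * ‖ξ‖ ^ 2 ≤ (inner ℂ (matCLM (W ζ) ξ) ξ : ℂ).re)
    (K : Submodule ℂ ↥(Hardy n)) (hK : IsClosed (K : Set ↥(Hardy n)))
    (hbound : ∀ f ∈ K, ‖Hankel M f‖ ≤ Real.sqrt (wNormSq W (↑f : L2 n)))
    (hsup : sSup { v : ℝ | ∃ f ∈ K, Real.sqrt (wNormSq W (↑f : L2 n)) = 1 ∧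
        v = ‖Hankel M f‖ } = 1) :
    ∃ f₀ ∈ K, f₀ ≠ 0 ∧ ‖Hankel M f₀‖ = Real.sqrt (wNormSq W (↑f₀ : L2 n)) :=
  exists_maximizer_weighted_hankel_general n M W hWb a ha hW K hK hbound hsup

end MeroIdx
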